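/- arXiv:1601.04076 — 4 statements merged into one kernel-verified Lean document; each statement's English description precedes it below -/
import Mathlib

section
/- Let D be the Dynkin diagram of type A_{n-1}, a path graph with vertices labelled 1, …, n−1. The map sending a connected subdiagram B with vertex set {i, …, j−1} to the pair of parentheses enclosing x_i ⋯ x_j in the monomial x_1 ⋯ x_n induces a bijection between maximal nested sets on D and complete bracketings of the non-associative monomial x_1 ⋯ x_n. Under this map, two connected subdiagrams are compatible if and only if the corresponding pairs of parentheses are consistent (either nested or disjoint). -/
namespace Stmt2

/-- The vertex set of the connected subdiagram of the type `A_{n-1}` path graph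
corresponding to the pair of parentheses enclosing `x_i ⋯ x_j`, i.e. the
vertices `i, …, j-1`. -/
def VSet (p : ℕ × ℕ) : Set ℕ := Set.Ico p.1 p.2

/-- `p = (i, j)` with `1 ≤ i < j ≤ n` encodes both a connected subdiagram of the
path with vertices `1, …, n-1` (vertex set `{i, …, j-1}`) and the pair of
parentheses `(x_i ⋯ x_j)`. -/
def IsInterval (n : ℕ) (p : ℕ × ℕ) : Prop := 1 ≤ p.1 ∧ p.1 < p.2 ∧ p.2 ≤ n

/-- Orthogonality of subdiagrams: no two vertices are equal or joined by an
edge of the path graph (adjacency being `|a - b| = 1`). -/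
def Orthogonal (p q : ℕ × ℕ) : Prop :=
  ∀ a ∈ VSet p, ∀ b ∈ VSet q, a ≠ b ∧ a + 1 ≠ b ∧ b + 1 ≠ a

/-- Compatibility of subdiagrams: one contains the other, or they are
orthogonal. -/
def Compatible (p q : ℕ × ℕ) : Prop :=
  VSet p ⊆ VSet q ∨ VSet q ⊆ VSet p ∨ Orthogonal p q

/-- Consistency of pairs of parentheses: nested or disjoint. -/
def Consistent (p q : ℕ × ℕ) : Prop :=
  (q.1 ≤ p.1 ∧ p.2 ≤ q.2) ∨ (p.1 ≤ q.1 ∧ q.2 ≤ p.2) ∨ p.2 < q.1 ∨ q.2 < p.1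

/-- A maximal nested set on the type `A_{n-1}` diagram: a maximal collection of
pairwise compatible connected subdiagrams containing `D` itself. -/
def IsMaxNestedSet (n : ℕ) (F : Set (ℕ × ℕ)) : Prop :=
  (∀ p ∈ F, IsInterval n p) ∧ (1, n) ∈ F ∧
    (∀ p ∈ F, ∀ q ∈ F, Compatible p q) ∧
    ∀ G : Set (ℕ × ℕ), (∀ p ∈ G, IsInterval n p) → (1, n) ∈ G →
      (∀ p ∈ G, ∀ q ∈ G, Compatible p q) → F ⊆ G → G = F

/-- A complete bracketing of `x_1 ⋯ x_n`: a maximal collection of pairwise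
consistent pairs of parentheses containing the outermost pair. -/
def IsCompleteBracketing (n : ℕ) (F : Set (ℕ × ℕ)) : Prop :=
  (∀ p ∈ F, IsInterval n p) ∧ (1, n) ∈ F ∧
    (∀ p ∈ F, ∀ q ∈ F, Consistent p q) ∧
    ∀ G : Set (ℕ × ℕ), (∀ p ∈ G, IsInterval n p) → (1, n) ∈ G →
      (∀ p ∈ G, ∀ q ∈ G, Consistent p q) → F ⊆ G → G = F


lemma orth_iff {n : ℕ} {p q : ℕ × ℕ} (hp : IsInterval n p) (hq : IsInterval n q) :
    Orthogonal p q ↔ p.2 < q.1 ∨ q.2 < p.1 := by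
  obtain ⟨a, b⟩ := p; obtain ⟨c, d⟩ := q
  obtain ⟨h1, h2, h3⟩ := hp; obtain ⟨h4, h5, h6⟩ := hq
  simp only [Orthogonal, VSet, Set.mem_Ico] at *
  constructor
  · intro h
    by_contra hc
    push_neg at hc
    obtain ⟨hcb, had⟩ := hc
    rcases Nat.lt_or_ge (max a c) (min b d) with hlt | hge
    · exact (h (max a c) ⟨le_max_left _ _, lt_of_lt_of_le hlt (min_le_left _ _)⟩
        (max a c) ⟨le_max_right _ _, lt_of_lt_of_le hlt (min_le_right _ _)⟩).1 rfl
    · rcases Nat.lt_or_ge (b - 1) c with hbc | hbc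
      · have := h (b - 1) ⟨by omega, by omega⟩ c ⟨le_refl c, h5⟩
        omega
      · have hda : d - 1 < a := by omega
        have := h a ⟨le_refl a, h2⟩ (d - 1) ⟨by omega, by omega⟩
        omega
  · intro h x hx y hy
    omega

lemma key {n : ℕ} {p q : ℕ × ℕ} (hp : IsInterval n p) (hq : IsInterval n q) :
    Compatible p q ↔ Consistent p q := by
  rw [Compatible, Consistent, orth_iff hp hq, VSet, VSet,
    Set.Ico_subset_Ico_iff hp.2.1, Set.Ico_subset_Ico_iff hq.2.1]


/-- Compatibility of connected subdiagrams corresponds exactly to consistency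
of the corresponding pairs of parentheses; hence the identification induces a
bijection between maximal nested sets on the type `A_{n-1}` diagram and
complete bracketings of `x_1 ⋯ x_n`. -/
theorem stmt2 (n : ℕ) (hn : 2 ≤ n) :
    (∀ p q : ℕ × ℕ, IsInterval n p → IsInterval n q →
      (Compatible p q ↔ Consistent p q)) ∧
    (∀ F : Set (ℕ × ℕ), IsMaxNestedSet n F ↔ IsCompleteBracketing n F) := by
  constructor
  · intro p q hp hq; exact key hp hq
  · intro F
    constructor
    · rintro ⟨h1, h2, h3, h4⟩
      refine ⟨h1, h2, fun p hp q hq => (key (h1 p hp) (h1 q hq)).1 (h3 p hp q hq),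
        fun G hG1 hG2 hG3 hG4 => h4 G hG1 hG2
          (fun p hp q hq => (key (hG1 p hp) (hG1 q hq)).2 (hG3 p hp q hq)) hG4⟩
    · rintro ⟨h1, h2, h3, h4⟩
      refine ⟨h1, h2, fun p hp q hq => (key (h1 p hp) (h1 q hq)).2 (h3 p hp q hq),
        fun G hG1 hG2 hG3 hG4 => h4 G hG1 hG2
          (fun p hp q hq => (key (hG1 p hp) (hG1 q hq)).1 (hG3 p hp q hq)) hG4⟩

end Stmt2
end

section
/- Let D be a connected diagram with |D| vertices and let 𝓕 be a maximal nested set on D. Then: (a) the cardinality of 𝓕 equals |D|; and (b) for every B ∈ 𝓕, the union of the maximal elements of 𝓕 properly contained in B covers all vertices of B except exactly one vertex α^B_𝓕, and these maximal elements are precisely the connected components of B minus the vertex α^B_𝓕. -/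
namespace Stmt3

variable {V : Type*} [Fintype V] [DecidableEq V] (G : SimpleGraph V)

/-- A (nonempty) connected subdiagram, i.e. a full subgraph which is
connected, identified with its vertex set. -/
def IsConnSub (B : Finset V) : Prop :=
  B.Nonempty ∧ (G.induce (B : Set V)).Connected

/-- Orthogonality: no vertices equal or adjacent. -/
def Orth (B₁ B₂ : Finset V) : Prop :=
  ∀ a ∈ B₁, ∀ b ∈ B₂, a ≠ b ∧ ¬ G.Adj a b

/-- Compatibility: one contains the other, or they are orthogonal. -/
def Compat (B₁ B₂ : Finset V) : Prop :=
  B₁ ⊆ B₂ ∨ B₂ ⊆ B₁ ∨ Orth G B₁ B₂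

/-- A nested set on the connected diagram `G`: pairwise compatible connected
subdiagrams containing the whole diagram. -/
def IsNested (𝓕 : Finset (Finset V)) : Prop :=
  (∀ B ∈ 𝓕, IsConnSub G B) ∧ (∀ B₁ ∈ 𝓕, ∀ B₂ ∈ 𝓕, Compat G B₁ B₂) ∧
    Finset.univ ∈ 𝓕

/-- A maximal nested set. -/
def IsMaxNested (𝓕 : Finset (Finset V)) : Prop :=
  IsNested G 𝓕 ∧ ∀ 𝓖, IsNested G 𝓖 → 𝓕 ⊆ 𝓖 → 𝓖 = 𝓕

/-- The maximal elements of `𝓕` properly contained in `B`. -/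
def MaxBelow (𝓕 : Finset (Finset V)) (B : Finset V) : Set (Finset V) :=
  {C | C ∈ 𝓕 ∧ C ⊂ B ∧ ∀ C' ∈ 𝓕, C ⊆ C' → C' ⊂ B → C' = C}

/-! For `B ∈ 𝓕`, the maximal members of `𝓕` strictly below `B` are pairwise orthogonal, so they
cannot cover the connected set `B`: some vertex `α ∈ B` is left uncovered. Each maximal connected
subset of `B ∖ {α}` is compatible with every member of `𝓕` (members below `B` avoid `α`, and a
connected set inside `B ∖ {α}` either lies in such a component or is orthogonal to it), so by
maximality of `𝓕` it belongs to `𝓕`; hence these components are exactly the maximal members below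
`B`, and they cover `B ∖ {α}`, which makes `α` unique. Finally `B ↦ α` is a bijection `𝓕 → D`:
distinct members have distinct uncovered vertices, and `v` is the uncovered vertex of the smallest
member containing it. -/

/-- The connected components of the diagram `S`. -/
def IsMaxConnSub (S C : Finset V) : Prop :=
  C ⊆ S ∧ IsConnSub G C ∧ ∀ C' : Finset V, C ⊆ C' → C' ⊆ S → IsConnSub G C' → C' = C

/-- `α` is the paper's `α^B_𝓕`; it is unique by `IsMaxNested.isUncovered_unique`. -/
def IsUncovered (𝓕 : Finset (Finset V)) (B : Finset V) (α : V) : Prop :=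
  α ∈ B ∧ ∀ C ∈ MaxBelow 𝓕 B, α ∉ C

section

variable {G}

section

omit [Fintype V] [DecidableEq V]

lemma Orth.symm {B₁ B₂ : Finset V} (h : Orth G B₁ B₂) : Orth G B₂ B₁ :=
  fun a ha b hb => ⟨(h b hb a ha).1.symm, fun hab => (h b hb a ha).2 hab.symm⟩

lemma Orth.mono_left {A B₁ B₂ : Finset V} (h : Orth G B₂ A) (hB : B₁ ⊆ B₂) : Orth G B₁ A :=
  fun a ha b hb => h a (hB ha) b hb

lemma Compat.symm {B₁ B₂ : Finset V} (h : Compat G B₁ B₂) : Compat G B₂ B₁ := by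
  rcases h with h | h | h
  · exact Or.inr (Or.inl h)
  · exact Or.inl h
  · exact Or.inr (Or.inr h.symm)

lemma isConnSub_singleton (v : V) : IsConnSub G {v} := by
  refine ⟨Finset.singleton_nonempty v, ?_⟩
  rw [Finset.coe_singleton]
  exact ⟨SimpleGraph.Preconnected.of_subsingleton⟩

lemma IsConnSub.eq_of_subset_of_not_adj {A B : Finset V} (hB : IsConnSub G B) (hAB : A ⊆ B)
    (hA : A.Nonempty) (hcl : ∀ a ∈ A, ∀ b ∈ B, b ∉ A → ¬ G.Adj a b) : A = B := by
  obtain ⟨a, ha⟩ := hA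
  refine Finset.Subset.antisymm hAB fun b hb => ?_
  by_contra hbA
  obtain ⟨p⟩ := hB.2.preconnected ⟨a, hAB ha⟩ ⟨b, hb⟩
  obtain ⟨d, -, hd₁, hd₂⟩ := p.exists_boundary_dart {x | x.1 ∈ A} ha hbA
  exact hcl _ hd₁ _ d.snd.2 hd₂ d.adj

end

section

omit [Fintype V]

lemma IsConnSub.union_of_not_orth {A B : Finset V} (hA : IsConnSub G A) (hB : IsConnSub G B)
    (h : ¬ Orth G A B) : IsConnSub G (A ∪ B) := by
  refine ⟨hA.1.mono Finset.subset_union_left, ?_⟩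
  rw [Finset.coe_union]
  simp only [Orth, not_forall, not_and_or, not_not] at h
  obtain ⟨a, ha, b, hb, rfl | hab⟩ := h
  · exact SimpleGraph.induce_union_connected hA.2.preconnected hB.2.preconnected ⟨a, ha, hb⟩
  · exact SimpleGraph.connected_induce_union hA.2.preconnected hB.2.preconnected ha hb hab

lemma IsMaxConnSub.subset_or_orth {S C A : Finset V} (hC : IsMaxConnSub G S C)
    (hA : IsConnSub G A) (hAS : A ⊆ S) : A ⊆ C ∨ Orth G C A := by
  by_cases horth : Orth G C A
  · exact Or.inr horth
  · have hunion := hC.2.2 _ Finset.subset_union_left (Finset.union_subset hC.1 hAS)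
      (hC.2.1.union_of_not_orth hA horth)
    exact Or.inl (hunion ▸ Finset.subset_union_right)

end

section

omit [DecidableEq V]

lemma exists_isMaxConnSub_superset {A S : Finset V} (hA : IsConnSub G A) (hAS : A ⊆ S) :
    ∃ C, IsMaxConnSub G S C ∧ A ⊆ C := by
  obtain ⟨C, hAC, ⟨hCS, hC⟩, hmax⟩ :=
    Finite.exists_le_maximal (p := fun C : Finset V => C ⊆ S ∧ IsConnSub G C) ⟨hAS, hA⟩
  exact ⟨C, ⟨hCS, hC, fun C' hCC' hC'S hC' => (hmax ⟨hC'S, hC'⟩ hCC').antisymm hCC'⟩, hAC⟩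

lemma exists_mem_maxBelow_superset {𝓕 : Finset (Finset V)} {A B : Finset V} (hA : A ∈ 𝓕)
    (hAB : A ⊂ B) : ∃ M ∈ MaxBelow 𝓕 B, A ⊆ M := by
  obtain ⟨M, hAM, ⟨hM, hMB⟩, hmax⟩ :=
    Finite.exists_le_maximal (p := fun C : Finset V => C ∈ 𝓕 ∧ C ⊂ B) ⟨hA, hAB⟩
  exact ⟨M, ⟨hM, hMB, fun C' hC' hMC' hC'B => (hmax ⟨hC', hC'B⟩ hMC').antisymm hMC'⟩, hAM⟩

lemma IsUncovered.notMem_of_ssubset {𝓕 : Finset (Finset V)} {A B : Finset V} {α : V}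
    (hα : IsUncovered 𝓕 B α) (hA : A ∈ 𝓕) (hAB : A ⊂ B) : α ∉ A := fun hαA => by
  obtain ⟨M, hM, hAM⟩ := exists_mem_maxBelow_superset hA hAB
  exact hα.2 M hM (hAM hαA)

variable {𝓕 : Finset (Finset V)} (h𝓕 : IsNested G 𝓕)
include h𝓕

lemma IsNested.orth_of_mem_maxBelow {B C₁ C₂ : Finset V} (h₁ : C₁ ∈ MaxBelow 𝓕 B)
    (h₂ : C₂ ∈ MaxBelow 𝓕 B) (hne : C₁ ≠ C₂) : Orth G C₁ C₂ := by
  rcases h𝓕.2.1 C₁ h₁.1 C₂ h₂.1 with h | h | h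
  · exact absurd (h₁.2.2 C₂ h₂.1 h h₂.2.1) hne.symm
  · exact absurd (h₂.2.2 C₁ h₁.1 h h₁.2.1) hne
  · exact h

lemma IsNested.exists_isUncovered {B : Finset V} (hB : B ∈ 𝓕) : ∃ α, IsUncovered 𝓕 B α := by
  by_contra hnone
  simp only [IsUncovered, not_exists, not_and, not_forall, not_not] at hnone
  obtain ⟨b, hb⟩ := (h𝓕.1 B hB).1
  obtain ⟨C, hC, hbC⟩ := hnone b hb
  refine hC.2.1.ne ((h𝓕.1 B hB).eq_of_subset_of_not_adj hC.2.1.1 ⟨b, hbC⟩ ?_)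
  intro x hx y hy hyC
  obtain ⟨C', hC', hyC'⟩ := hnone y hy
  have hne : C ≠ C' := fun h => hyC (h ▸ hyC')
  exact (h𝓕.orth_of_mem_maxBelow hC hC' hne x hx y hyC').2

lemma IsNested.isUncovered_injective {B₁ B₂ : Finset V} {α : V} (hB₁ : B₁ ∈ 𝓕) (hB₂ : B₂ ∈ 𝓕)
    (h₁ : IsUncovered 𝓕 B₁ α) (h₂ : IsUncovered 𝓕 B₂ α) : B₁ = B₂ := by
  by_contra hne
  rcases h𝓕.2.1 B₁ hB₁ B₂ hB₂ with h | h | h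
  · exact h₂.notMem_of_ssubset hB₁ (h.ssubset_of_ne hne) h₁.1
  · exact h₁.notMem_of_ssubset hB₂ (h.ssubset_of_ne (Ne.symm hne)) h₂.1
  · exact (h α h₁.1 α h₂.1).1 rfl

end

lemma IsUncovered.subset_erase_of_ssubset {𝓕 : Finset (Finset V)} {A B : Finset V} {α : V}
    (hα : IsUncovered 𝓕 B α) (hA : A ∈ 𝓕) (hAB : A ⊂ B) : A ⊆ B.erase α := fun x hx =>
  Finset.mem_erase.2 ⟨by rintro rfl; exact hα.notMem_of_ssubset hA hAB hx, hAB.1 hx⟩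

section MaxNested

variable {𝓕 : Finset (Finset V)} (h𝓕 : IsMaxNested G 𝓕)
include h𝓕

lemma IsMaxNested.mem_of_forall_compat {C : Finset V} (hC : IsConnSub G C)
    (hcompat : ∀ A ∈ 𝓕, Compat G C A) : C ∈ 𝓕 := by
  have hnested : IsNested G (insert C 𝓕) := by
    refine ⟨?_, ?_, Finset.mem_insert_of_mem h𝓕.1.2.2⟩
    · intro B hB
      rcases Finset.mem_insert.1 hB with rfl | hB
      exacts [hC, h𝓕.1.1 B hB]
    · intro B₁ hB₁ B₂ hB₂
      rcases Finset.mem_insert.1 hB₁ with rfl | h₁ <;> rcases Finset.mem_insert.1 hB₂ with rfl | h₂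
      · exact Or.inl le_rfl
      · exact hcompat B₂ h₂
      · exact (hcompat B₁ h₁).symm
      · exact h𝓕.1.2.1 B₁ h₁ B₂ h₂
  rw [← h𝓕.2 _ hnested (Finset.subset_insert C 𝓕)]
  exact Finset.mem_insert_self C 𝓕

lemma IsMaxNested.mem_maxBelow_of_isMaxConnSub {B K : Finset V} {α : V} (hB : B ∈ 𝓕)
    (hα : IsUncovered 𝓕 B α) (hK : IsMaxConnSub G (B.erase α) K) : K ∈ MaxBelow 𝓕 B := by
  have hKB : K ⊂ B := Finset.ssubset_of_subset_of_ssubset hK.1 (Finset.erase_ssubset hα.1)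
  have hK𝓕 : K ∈ 𝓕 := by
    refine h𝓕.mem_of_forall_compat hK.2.1 fun A hA => ?_
    rcases h𝓕.1.2.1 A hA B hB with hAB | hBA | hAB
    · rcases hAB.eq_or_ssubset with rfl | hAB
      · exact Or.inl hKB.1
      · rcases hK.subset_or_orth (h𝓕.1.1 A hA) (hα.subset_erase_of_ssubset hA hAB) with h | h
        exacts [Or.inr (Or.inl h), Or.inr (Or.inr h)]
    · exact Or.inl (hKB.1.trans hBA)
    · exact Or.inr (Or.inr (hAB.symm.mono_left hKB.1))
  exact ⟨hK𝓕, hKB, fun C' hC' hKC' hC'B =>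
    hK.2.2 C' hKC' (hα.subset_erase_of_ssubset hC' hC'B) (h𝓕.1.1 C' hC')⟩

lemma IsMaxNested.mem_maxBelow_iff {B C : Finset V} {α : V} (hB : B ∈ 𝓕)
    (hα : IsUncovered 𝓕 B α) : C ∈ MaxBelow 𝓕 B ↔ IsMaxConnSub G (B.erase α) C := by
  constructor
  · intro hC
    have hCα := hα.subset_erase_of_ssubset hC.1 hC.2.1
    obtain ⟨K, hK, hCK⟩ := exists_isMaxConnSub_superset (h𝓕.1.1 C hC.1) hCα
    have hKB := h𝓕.mem_maxBelow_of_isMaxConnSub hB hα hK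
    exact hC.2.2 K hKB.1 hCK hKB.2.1 ▸ hK
  · exact h𝓕.mem_maxBelow_of_isMaxConnSub hB hα

lemma IsMaxNested.exists_mem_maxBelow {B : Finset V} {α v : V} (hB : B ∈ 𝓕)
    (hα : IsUncovered 𝓕 B α) (hv : v ∈ B) (hvα : v ≠ α) : ∃ C ∈ MaxBelow 𝓕 B, v ∈ C := by
  have hv' : v ∈ B.erase α := Finset.mem_erase.2 ⟨hvα, hv⟩
  obtain ⟨K, hK, hvK⟩ :=
    exists_isMaxConnSub_superset (isConnSub_singleton v) (Finset.singleton_subset_iff.2 hv')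
  exact ⟨K, h𝓕.mem_maxBelow_of_isMaxConnSub hB hα hK, Finset.singleton_subset_iff.1 hvK⟩

lemma IsMaxNested.isUncovered_unique {B : Finset V} {α β : V} (hB : B ∈ 𝓕)
    (hα : IsUncovered 𝓕 B α) (hβ : IsUncovered 𝓕 B β) : α = β := by
  by_contra hne
  obtain ⟨C, hC, hαC⟩ := h𝓕.exists_mem_maxBelow hB hβ hα.1 hne
  exact hα.2 C hC hαC

lemma IsMaxNested.exists_mem_isUncovered (v : V) : ∃ B ∈ 𝓕, IsUncovered 𝓕 B v := by
  obtain ⟨B, -, ⟨hB, hvB⟩, hmin⟩ :=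
    Finite.exists_le_minimal (p := fun B : Finset V => B ∈ 𝓕 ∧ v ∈ B) (a := Finset.univ)
      ⟨h𝓕.1.2.2, Finset.mem_univ v⟩
  obtain ⟨α, hα⟩ := h𝓕.1.exists_isUncovered hB
  obtain rfl : v = α := by
    by_contra hne
    obtain ⟨C, hC, hvC⟩ := h𝓕.exists_mem_maxBelow hB hα hvB hne
    exact hC.2.1.not_subset (hmin ⟨hC.1, hvC⟩ hC.2.1.1)
  exact ⟨B, hB, hα⟩

lemma IsMaxNested.card_eq : 𝓕.card = Fintype.card V := by
  choose α hα using fun B (hB : B ∈ 𝓕) => h𝓕.1.exists_isUncovered hB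
  refine Finset.card_bij α (fun _ _ => Finset.mem_univ _) ?_ ?_
  · intro B₁ hB₁ B₂ hB₂ heq
    exact h𝓕.1.isUncovered_injective hB₁ hB₂ (hα B₁ hB₁) (heq ▸ hα B₂ hB₂)
  · intro v _
    obtain ⟨B, hB, hv⟩ := h𝓕.exists_mem_isUncovered v
    exact ⟨B, hB, h𝓕.isUncovered_unique hB (hα B hB) hv⟩

end MaxNested

end

theorem stmt3 (𝓕 : Finset (Finset V)) (h𝓕 : IsMaxNested G 𝓕) :
    𝓕.card = Fintype.card V ∧
    ∀ B ∈ 𝓕, ∃! α, α ∈ B ∧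
      ((∀ v ∈ B, v ≠ α → ∃ C ∈ MaxBelow 𝓕 B, v ∈ C) ∧
       (∀ C ∈ MaxBelow 𝓕 B, α ∉ C) ∧
       (∀ C : Finset V, C ∈ MaxBelow 𝓕 B ↔
         (C ⊆ B.erase α ∧ IsConnSub G C ∧
           ∀ C' : Finset V, C ⊆ C' → C' ⊆ B.erase α → IsConnSub G C' → C' = C))) := by
  refine ⟨h𝓕.card_eq, fun B hB => ?_⟩
  obtain ⟨α, hα⟩ := h𝓕.1.exists_isUncovered hB
  refine ⟨α, ⟨hα.1, fun v hv hvα => h𝓕.exists_mem_maxBelow hB hα hv hvα, hα.2,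
    fun C => h𝓕.mem_maxBelow_iff hB hα⟩, fun β hβ => ?_⟩
  exact h𝓕.isUncovered_unique hB ⟨hβ.1, hβ.2.2.1⟩ hα

end Stmt3
end

section
/- Let V be a finite-dimensional complex vector space and k: H_+^R → V holomorphic with an asymptotic expansion k(z) ~ Σ_{n≥0} k_n z^{−n} valid in sectors δ < arg z < π − δ, and suppose k₀ ≠ 0. Then the equation h'(z) = k(z)/z (i.e. λ = 0) has no holomorphic solution h on H_+^R tending to 0 at infinity in all such sectors. -/
/-!
Restrict to the imaginary axis: `g t = h (t * I)` satisfies `g' t = t⁻¹ • k (t * I)`, and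
`k (t * I) = k₀ + O(t⁻¹)`. Hence `g t - log t • k₀` has derivative `O(t⁻²)` and stays bounded,
while `g t → 0`; so `log t • k₀` is bounded as `t → ∞`, forcing `k₀ = 0`.
-/

open Filter

/-- The filter of `z → ∞` within the sector `δ < arg z < π − δ`. -/
noncomputable def sectorFilter12 (δ : ℝ) : Filter ℂ :=
  (Filter.comap (fun z : ℂ => ‖z‖) Filter.atTop) ⊓
    Filter.principal {z : ℂ | δ < Complex.arg z ∧ Complex.arg z < Real.pi - δ}

open Complex Real Set Topology

section

variable {E : Type*} [NormedAddCommGroup E] [NormedSpace ℝ E]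

theorem norm_sub_le_of_norm_deriv_le_div_sq {F F' : ℝ → E} {T C : ℝ} (hT : 0 < T)
    (hF : ∀ s ≥ T, HasDerivAt F (F' s) s) (hF' : ∀ s ≥ T, ‖F' s‖ ≤ C / s ^ 2)
    {t : ℝ} (ht : T ≤ t) : ‖F t - F T‖ ≤ C / T - C / t := by
  have hpos : ∀ s ∈ Icc T t, 0 < s := fun s hs => hT.trans_le hs.1
  refine image_norm_le_of_norm_deriv_right_le_deriv_boundary' (f := fun s => F s - F T)
    (fun s hs => ((hF s hs.1).continuousAt.sub continuousAt_const).continuousWithinAt)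
    (fun s hs => ((hF s hs.1).sub_const (F T)).hasDerivWithinAt)
    (B := fun s => C / T - C / s) (B' := fun s => C / s ^ 2) (by simp)
    (fun s hs => (continuousAt_const.sub
      (continuousAt_const.div continuousAt_id (hpos s hs).ne')).continuousWithinAt)
    (fun s hs => ?_) (fun s hs => hF' s hs.1) (right_mem_Icc.2 ht)
  have hs : s ≠ 0 := (hpos s (Ico_subset_Icc_self hs)).ne'
  have hB := ((hasDerivAt_inv hs).const_mul C).const_sub (C / T)
  simp only [mul_neg, neg_neg, ← div_eq_mul_inv] at hB
  exact hB.hasDerivWithinAt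

theorem norm_sub_le_div_of_norm_deriv_le_div_sq {F F' : ℝ → E} {T C : ℝ} (hT : 0 < T)
    (hF : ∀ s ≥ T, HasDerivAt F (F' s) s) (hF' : ∀ s ≥ T, ‖F' s‖ ≤ C / s ^ 2)
    {t : ℝ} (ht : T ≤ t) : ‖F t - F T‖ ≤ C / T := by
  have hC : 0 ≤ C := by
    have := (norm_nonneg _).trans (hF' T le_rfl)
    exact (div_nonneg_iff.mp this).elim (·.1) fun h => absurd h.2 (not_le.2 (pow_pos hT 2))
  have : 0 ≤ C / t := div_nonneg hC (hT.le.trans ht)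
  linarith [norm_sub_le_of_norm_deriv_le_div_sq hT hF hF' ht]

theorem eq_zero_of_tendsto_of_hasDerivAt_inv_smul {g w : ℝ → E} {v : E} {a C : ℝ}
    (hg : ∀ t > a, HasDerivAt g (t⁻¹ • w t) t) (hw : ∀ t > a, ‖w t - v‖ ≤ C / t)
    (hlim : Tendsto g atTop (𝓝 0)) : v = 0 := by
  by_contra hv
  set T := max a 0 + 1
  have hT : 0 < T := by positivity
  have haT : a < T := (le_max_left a 0).trans_lt (lt_add_one _)
  set F : ℝ → E := fun t => g t - Real.log t • v
  have hF : ∀ s ≥ T, HasDerivAt F (s⁻¹ • (w s - v)) s := fun s hs => by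
    rw [smul_sub]
    exact (hg s (haT.trans_le hs)).sub
      ((Real.hasDerivAt_log (hT.trans_le hs).ne').smul_const v)
  have hF' : ∀ s ≥ T, ‖s⁻¹ • (w s - v)‖ ≤ C / s ^ 2 := fun s hs => by
    have hs0 : 0 < s := hT.trans_le hs
    rw [norm_smul, Real.norm_of_nonneg (inv_nonneg.2 hs0.le), inv_mul_le_iff₀ hs0]
    calc ‖w s - v‖ ≤ C / s := hw s (haT.trans_le hs)
      _ = s * (C / s ^ 2) := by field_simp
  have hlog_le : ∀ t ≥ T, Real.log t * ‖v‖ ≤ ‖g t‖ + ‖F T‖ + C / T := fun t ht => by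
    have hdecomp : Real.log t • v = g t - F T - (F t - F T) := by simp [F]
    calc Real.log t * ‖v‖ ≤ ‖Real.log t • v‖ := by
          rw [norm_smul, Real.norm_eq_abs]; gcongr; exact le_abs_self _
      _ ≤ ‖g t‖ + ‖F T‖ + ‖F t - F T‖ := by
          rw [hdecomp]; exact (norm_sub_le _ _).trans (by gcongr; exact norm_sub_le _ _)
      _ ≤ ‖g t‖ + ‖F T‖ + C / T := by
          gcongr; exact norm_sub_le_div_of_norm_deriv_le_div_sq hT hF hF' ht
  have hlog_top : Tendsto (fun t => Real.log t * ‖v‖) atTop atTop :=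
    Real.tendsto_log_atTop.atTop_mul_const (norm_pos_iff.2 hv)
  obtain ⟨t, hgt, hlogt, hTt⟩ := ((NormedAddGroup.tendsto_nhds_zero.1 hlim 1 one_pos).and
    ((hlog_top.eventually_gt_atTop (1 + ‖F T‖ + C / T)).and (eventually_ge_atTop T))).exists
  linarith [hlog_le t hTt]

end

theorem tendsto_ofReal_mul_I_sectorFilter12 {δ : ℝ} (hδ : δ < π / 2) :
    Tendsto (fun t : ℝ => (t : ℂ) * I) atTop (sectorFilter12 δ) := by
  refine tendsto_inf.2 ⟨tendsto_comap_iff.2 ?_, tendsto_principal.2 ?_⟩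
  · refine tendsto_id.congr' ?_
    filter_upwards [eventually_ge_atTop 0] with t ht
    simp [abs_of_nonneg ht]
  · filter_upwards [eventually_gt_atTop 0] with t ht
    rw [arg_real_mul _ ht, arg_I]
    constructor <;> linarith

theorem hasDerivAt_ofReal_mul_I_of_hasDerivAt_inv_smul {V : Type*} [NormedAddCommGroup V]
    [NormedSpace ℂ V] {h : ℂ → V} {u : V} {t : ℝ}
    (hh : HasDerivAt h (((t : ℂ) * I)⁻¹ • u) (t * I)) :
    HasDerivAt (fun s : ℝ => h (s * I)) (t⁻¹ • u) t := by
  have hI : HasDerivAt (fun s : ℝ => (s : ℂ) * I) I t := by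
    simpa using (hasDerivAt_id (t : ℂ)).comp_ofReal.mul_const I
  refine (hh.scomp t hI).congr_deriv ?_
  have hIt : I * ((t : ℂ) * I)⁻¹ = ((t⁻¹ : ℝ) : ℂ) := by
    rw [mul_inv, mul_left_comm, mul_inv_cancel₀ I_ne_zero, mul_one, ofReal_inv]
  rw [smul_smul, hIt, Complex.coe_smul]

theorem stmt12_general {V : Type*} [NormedAddCommGroup V] [NormedSpace ℂ V]
    (R : ℝ) (hR : 0 ≤ R) (k : ℂ → V)
    (kc : ℕ → V) (hk0 : kc 0 ≠ 0)
    (hasy : ∀ δ > 0, ∀ n : ℕ, ∃ C : ℝ, ∀ z : ℂ,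
      (0 < z.im ∧ R < ‖z‖) →
      (δ < Complex.arg z ∧ Complex.arg z < Real.pi - δ) →
      ‖k z - ∑ m ∈ Finset.range (n + 1), (z ^ m)⁻¹ • kc m‖ ≤
        C * (‖z‖) ^ (-(n + 1 : ℤ))) :
    ¬ ∃ h : ℂ → V,
        (∀ z ∈ {z : ℂ | 0 < z.im ∧ R < ‖z‖},
          HasDerivAt h (z⁻¹ • k z) z) ∧
        (∀ δ > 0, Tendsto h (sectorFilter12 δ) (nhds 0)) := by
  rintro ⟨h, hderiv, hlim⟩
  obtain ⟨C, hC⟩ := hasy 1 one_pos 0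
  have hπ : 1 < π / 2 := by linarith [Real.pi_gt_three]
  have hpos : ∀ t > R, 0 < t := fun t ht => hR.trans_lt ht
  have hmem : ∀ t > R, 0 < ((t : ℂ) * I).im ∧ R < ‖(t : ℂ) * I‖ := fun t ht => by
    simpa [abs_of_pos (hpos t ht)] using ⟨hpos t ht, ht⟩
  have harg : ∀ t > R, 1 < arg ((t : ℂ) * I) ∧ arg ((t : ℂ) * I) < π - 1 := fun t ht => by
    rw [arg_real_mul _ (hpos t ht), arg_I]
    constructor <;> linarith
  refine hk0 (eq_zero_of_tendsto_of_hasDerivAt_inv_smul (a := R) (C := C)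
    (fun t ht => hasDerivAt_ofReal_mul_I_of_hasDerivAt_inv_smul (hderiv _ (hmem t ht)))
    (fun t ht => ?_) ((hlim 1 one_pos).comp (tendsto_ofReal_mul_I_sectorFilter12 hπ)))
  simpa [abs_of_pos (hpos t ht), div_eq_mul_inv] using hC _ (hmem t ht) (harg t ht)

/-- If `k` has an asymptotic expansion `k(z) ~ Σ_{n≥0} k_n z^{−n}` on the
sectors of `H₊^R` with `k₀ ≠ 0`, the equation `h' = k/z` (the case `λ = 0`)
has no holomorphic solution tending to `0` at `∞` in all sectors. -/
theorem stmt12 {V : Type*} [NormedAddCommGroup V] [NormedSpace ℂ V]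
    [FiniteDimensional ℂ V]
    (R : ℝ) (hR : 0 ≤ R) (k : ℂ → V)
    (hk : DifferentiableOn ℂ k {z : ℂ | 0 < z.im ∧ R < ‖z‖})
    (kc : ℕ → V) (hk0 : kc 0 ≠ 0)
    (hasy : ∀ δ > 0, ∀ n : ℕ, ∃ C : ℝ, ∀ z : ℂ,
      (0 < z.im ∧ R < ‖z‖) →
      (δ < Complex.arg z ∧ Complex.arg z < Real.pi - δ) →
      ‖k z - ∑ m ∈ Finset.range (n + 1), (z ^ m)⁻¹ • kc m‖ ≤
        C * (‖z‖) ^ (-(n + 1 : ℤ))) :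
    ¬ ∃ h : ℂ → V,
        (∀ z ∈ {z : ℂ | 0 < z.im ∧ R < ‖z‖},
          HasDerivAt h (z⁻¹ • k z) z) ∧
        (∀ δ > 0, Tendsto h (sectorFilter12 δ) (nhds 0)) :=
  stmt12_general R hR k kc hk0 hasy
end

section
/- Let 𝔤 = sl₂ with standard generators E, F, H, and let U_ħ(sl₂) be the Drinfeld–Jimbo quantum group over ℂ[[ħ]] with q = e^ħ. Let S̃ be the quantum Weyl group operator acting on a weight vector v of weight j̄ = −m+2j by S̃ v = Σ_{a−b+c = −j̄} (−1)^b q^{b−ac} E^{(a)} F^{(b)} E^{(c)} v, with divided powers E^{(a)} = E^a/[a]!. Then on the indecomposable representation V_m of dimension m+1, S̃² = exp(πi H)·q^{κ}, where exp(πi H) acts on V_m by (−1)^m and κ = C − H²/2 is the truncated Casimir; equivalently, S̃² acts on the weight-j̄ vector of V_m by (−1)^m q^{(m−j̄)(m+j̄)/2 + m}. -/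
namespace Stmt19

noncomputable section

/-- The ground ring `ℂ[[ħ]]`. -/
abbrev Rq := PowerSeries ℂ

/-- `qz c = exp (c·ħ) = q^c` for `q = e^ħ`, as a power series in `ħ`. -/
def qz (c : ℤ) : Rq := PowerSeries.mk (fun n => (c : ℂ) ^ n / (n.factorial : ℂ))

/-- The quantum integer `[n] = q^{n-1} + q^{n-3} + ⋯ + q^{1-n}`. -/
def qint (n : ℕ) : Rq := ∑ t ∈ Finset.range n, qz ((n : ℤ) - 1 - 2 * t)

/-- The quantum factorial `[n]!`. -/
def qfact (n : ℕ) : Rq := ∏ t ∈ Finset.range n, qint (t + 1)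

/-- The quantum binomial coefficient `[n choose k]` (using that `[k]![n−k]!`
is invertible in `ℂ[[ħ]]`). -/
def qbinom (n k : ℕ) : Rq := Ring.inverse (qfact k * qfact (n - k)) * qfact n

variable (m : ℕ)

/-- The matrix of the divided power `E^{(a)}` on the `(m+1)`-dimensional
indecomposable `U_ħ(sl₂)`-module `V_m`, in the basis `v_j = F^{(j)} v₀`
(so `v_j` has weight `m − 2j`): `E^{(a)} v_j = [m−j+a choose a] v_{j−a}`. -/
def ED (a : ℕ) : Matrix (Fin (m + 1)) (Fin (m + 1)) Rq :=
  fun i j => if (i : ℕ) + a = (j : ℕ) then qbinom (m - (j : ℕ) + a) a else 0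

/-- The matrix of `F^{(b)}` on `V_m`: `F^{(b)} v_j = [j+b choose b] v_{j+b}`. -/
def FD (b : ℕ) : Matrix (Fin (m + 1)) (Fin (m + 1)) Rq :=
  fun i j => if (i : ℕ) = (j : ℕ) + b then qbinom ((j : ℕ) + b) b else 0

/-- The quantum Weyl group operator `S̃ = T''_{1,+1}` on `V_m`: on a vector of
weight `j̄ = m − 2j` it acts by
`Σ_{a−b+c = −j̄} (−1)^b q^{b−ac} E^{(a)} F^{(b)} E^{(c)}` (all terms with
`a, b, c > m` act by zero on `V_m`). -/
def Sw : Matrix (Fin (m + 1)) (Fin (m + 1)) Rq :=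
  fun i j =>
    ∑ a ∈ Finset.range (m + 1), ∑ b ∈ Finset.range (m + 1),
      ∑ c ∈ Finset.range (m + 1),
        if (a : ℤ) - b + c = 2 * (j : ℤ) - m then
          ((-1 : Rq) ^ b * qz ((b : ℤ) - (a : ℤ) * c)) *
            (ED m a * FD m b * ED m c) i j
        else 0

lemma qz_eq_rescale (c : ℤ) : qz c = PowerSeries.rescale (c : ℂ) (PowerSeries.exp ℂ) := by
  ext n
  simp [qz, PowerSeries.coeff_rescale, PowerSeries.coeff_exp, algebraMap]
  ring

lemma qz_add (a b : ℤ) : qz (a + b) = qz a * qz b := by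
  rw [qz_eq_rescale, qz_eq_rescale, qz_eq_rescale, PowerSeries.exp_mul_exp_eq_exp_add]
  push_cast
  ring_nf

@[simp] lemma qz_zero : qz 0 = 1 := by
  ext n
  simp [qz, PowerSeries.coeff_one]
  cases n <;> simp

lemma qz_mul (a b : ℤ) : qz a * qz b = qz (a + b) := (qz_add a b).symm

@[simp] lemma constantCoeff_qz (c : ℤ) : PowerSeries.constantCoeff (qz c) = 1 := by
  simp [qz, ← PowerSeries.coeff_zero_eq_constantCoeff]

@[simp] lemma constantCoeff_qint (n : ℕ) :
    PowerSeries.constantCoeff (qint n) = n := by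
  simp [qint]

lemma isUnit_qint {n : ℕ} (h : 0 < n) : IsUnit (qint n) := by
  rw [PowerSeries.isUnit_iff_constantCoeff, constantCoeff_qint]
  exact isUnit_iff_ne_zero.2 (by exact_mod_cast h.ne')

lemma isUnit_qfact (n : ℕ) : IsUnit (qfact n) := by
  unfold qfact
  exact Finset.prod_induction _ IsUnit (fun _ _ => IsUnit.mul) isUnit_one
    (fun t _ => isUnit_qint (Nat.succ_pos t))

lemma qbinom_mul {n k : ℕ} :
    qbinom n k * (qfact k * qfact (n - k)) = qfact n := by
  rw [qbinom, mul_comm, ← mul_assoc,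
    Ring.mul_inverse_cancel _ ((isUnit_qfact k).mul (isUnit_qfact (n - k))), one_mul]

@[simp] lemma qfact_zero : qfact 0 = 1 := by simp [qfact]

@[simp] lemma qbinom_zero (n : ℕ) : qbinom n 0 = 1 := by
  simp only [qbinom, qfact_zero, Nat.sub_zero, one_mul]
  exact Ring.inverse_mul_cancel _ (isUnit_qfact n)

@[simp] lemma qbinom_self (n : ℕ) : qbinom n n = 1 := by
  simp only [qbinom, Nat.sub_self, qfact_zero, mul_one]
  exact Ring.inverse_mul_cancel _ (isUnit_qfact n)

lemma qbinom_symm {n k : ℕ} (h : k ≤ n) : qbinom n k = qbinom n (n - k) := by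
  rw [qbinom, qbinom, Nat.sub_sub_self h, mul_comm (qfact (n-k))]

lemma qint_zero : qint 0 = 0 := by simp [qint]

lemma qint_succ₁ (M : ℕ) : qint (M + 1) = qz M + qz (-1) * qint M := by
  rw [qint, qint, Finset.mul_sum, Finset.sum_range_succ', add_comm (qz (M:ℤ))]
  congr 1
  · refine Finset.sum_congr rfl fun t _ => ?_
    rw [qz_mul]
    congr 1
    push_cast
    ring
  · congr 1
    push_cast
    ring

lemma qint_succ₂ (M : ℕ) : qint (M + 1) = qz (-(M:ℤ)) + qz 1 * qint M := by
  rw [qint, qint, Finset.mul_sum, Finset.sum_range_succ, add_comm]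
  congr 1
  · congr 1
    push_cast
    ring
  · refine Finset.sum_congr rfl fun t _ => ?_
    rw [qz_mul]
    congr 1
    push_cast
    ring

lemma qint_split₁ (A B : ℕ) :
    qint (A + B) = qz B * qint A + qz (-(A:ℤ)) * qint B := by
  induction B with
  | zero => simp [qint_zero]
  | succ B ih =>
      have e1 := qint_succ₂ (A+B)
      have e2 := qint_succ₂ B
      have c1 : qz 1 * qz (B:ℤ) = qz ((B:ℤ)+1) := by rw [qz_mul, add_comm]
      have c2 : qz (-(A:ℤ)) * qz (-(B:ℤ)) = qz (-((A:ℤ)+B)) := by rw [qz_mul]; congr 1; ring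
      have c3 : qz 1 * qz (-(A:ℤ)) = qz (-(A:ℤ)) * qz 1 := mul_comm _ _
      rw [show A+(B+1) = (A+B)+1 by ring]
      push_cast at e1 e2 ih ⊢
      linear_combination e1 + qz 1 * ih + qint A * c1 - c2 - qz (-(A:ℤ)) * e2 + qint B * c3

lemma qint_split₂ (A B : ℕ) :
    qint (A + B) = qz (-(B:ℤ)) * qint A + qz A * qint B := by
  induction B with
  | zero => simp [qint_zero]
  | succ B ih =>
      have e1 := qint_succ₁ (A+B)
      have e2 := qint_succ₁ B
      have c1 : qz (-1) * qz (-(B:ℤ)) = qz (-((B:ℤ)+1)) := by rw [qz_mul]; congr 1; ring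
      have c2 : qz (A:ℤ) * qz (B:ℤ) = qz ((A:ℤ)+B) := by rw [qz_mul]
      have c3 : qz (-1) * qz (A:ℤ) = qz (A:ℤ) * qz (-1) := mul_comm _ _
      rw [show A+(B+1) = (A+B)+1 by ring]
      push_cast at e1 e2 ih ⊢
      linear_combination e1 + qz (-1) * ih + qint A * c1 - c2 - qz (A:ℤ) * e2 + qint B * c3

lemma qfact_succ (n : ℕ) : qfact (n + 1) = qint (n + 1) * qfact n := by
  rw [qfact, Finset.prod_range_succ, mul_comm, qfact]

lemma pascal_qbinom₁ {k x : ℕ} (h1 : 1 ≤ k) (h2 : k ≤ x) :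
    qbinom (x+1) k = qz ((x:ℤ)+1-k) * qbinom x (k-1) + qz (-(k:ℤ)) * qbinom x k := by
  have hU : IsUnit (qfact k * qfact (x+1-k)) := (isUnit_qfact _).mul (isUnit_qfact _)
  apply hU.mul_left_cancel
  have bm : qbinom (x+1) k * (qfact k * qfact (x+1-k)) = qfact (x+1) := qbinom_mul
  have e1 : qz ((x:ℤ)+1-k) * qbinom x (k-1) * (qfact k * qfact (x+1-k))
      = qz ((x:ℤ)+1-k) * qint k * qfact x := by
    have hk : qfact k = qint k * qfact (k-1) := by
      conv_lhs => rw [show k = (k-1)+1 by omega]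
      rw [qfact_succ, show (k-1)+1 = k by omega]
    have h : qbinom x (k-1) * (qfact (k-1) * qfact (x+1-k)) = qfact x := by
      rw [show x+1-k = x - (k-1) by omega]
      exact qbinom_mul
    rw [hk]
    linear_combination qz ((x:ℤ)+1-k) * qint k * h
  have e2 : qz (-(k:ℤ)) * qbinom x k * (qfact k * qfact (x+1-k))
      = qz (-(k:ℤ)) * qint (x+1-k) * qfact x := by
    have hk : qfact (x+1-k) = qint (x+1-k) * qfact (x-k) := by
      conv_lhs => rw [show x+1-k = (x-k)+1 by omega]
      rw [qfact_succ, show (x-k)+1 = x+1-k by omega]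
    have h : qbinom x k * (qfact k * qfact (x-k)) = qfact x := qbinom_mul
    rw [hk]
    linear_combination qz (-(k:ℤ)) * qint (x+1-k) * h
  have split : qint (x+1) = qz ((x:ℤ)+1-k) * qint k + qz (-(k:ℤ)) * qint (x+1-k) := by
    have h := qint_split₁ k (x+1-k)
    rw [show k + (x+1-k) = x+1 by omega] at h
    have hc : ((x+1-k:ℕ):ℤ) = (x:ℤ)+1-k := by omega
    rw [h, hc]
  linear_combination bm + qfact_succ x + qfact x * split - e1 - e2

lemma pascal_qbinom₂ {k x : ℕ} (h1 : 1 ≤ k) (h2 : k ≤ x) :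
    qbinom (x+1) k = qz ((k:ℤ)-(x:ℤ)-1) * qbinom x (k-1) + qz k * qbinom x k := by
  have hU : IsUnit (qfact k * qfact (x+1-k)) := (isUnit_qfact _).mul (isUnit_qfact _)
  apply hU.mul_left_cancel
  have bm : qbinom (x+1) k * (qfact k * qfact (x+1-k)) = qfact (x+1) := qbinom_mul
  have e1 : qz ((k:ℤ)-(x:ℤ)-1) * qbinom x (k-1) * (qfact k * qfact (x+1-k))
      = qz ((k:ℤ)-(x:ℤ)-1) * qint k * qfact x := by
    have hk : qfact k = qint k * qfact (k-1) := by
      conv_lhs => rw [show k = (k-1)+1 by omega]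
      rw [qfact_succ, show (k-1)+1 = k by omega]
    have h : qbinom x (k-1) * (qfact (k-1) * qfact (x+1-k)) = qfact x := by
      rw [show x+1-k = x - (k-1) by omega]
      exact qbinom_mul
    rw [hk]
    linear_combination qz ((k:ℤ)-(x:ℤ)-1) * qint k * h
  have e2 : qz (k:ℤ) * qbinom x k * (qfact k * qfact (x+1-k))
      = qz (k:ℤ) * qint (x+1-k) * qfact x := by
    have hk : qfact (x+1-k) = qint (x+1-k) * qfact (x-k) := by
      conv_lhs => rw [show x+1-k = (x-k)+1 by omega]
      rw [qfact_succ, show (x-k)+1 = x+1-k by omega]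
    have h : qbinom x k * (qfact k * qfact (x-k)) = qfact x := qbinom_mul
    rw [hk]
    linear_combination qz (k:ℤ) * qint (x+1-k) * h
  have split : qint (x+1) = qz ((k:ℤ)-(x:ℤ)-1) * qint k + qz k * qint (x+1-k) := by
    have h := qint_split₂ k (x+1-k)
    rw [show k + (x+1-k) = x+1 by omega] at h
    have hc : (-((x+1-k:ℕ):ℤ)) = (k:ℤ)-(x:ℤ)-1 := by omega
    rw [h, hc]
  linear_combination bm + qfact_succ x + qfact x * split - e1 - e2
/-- `q`-binomial with integer lower index, zero outside `0 ≤ k ≤ x`. -/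
def QbZ (x : ℕ) (k : ℤ) : Rq := if 0 ≤ k ∧ k ≤ (x:ℤ) then qbinom x k.toNat else 0

lemma QbZ_eq_qbinom {x : ℕ} {k : ℤ} (h0 : 0 ≤ k) (h1 : k ≤ (x:ℤ)) :
    QbZ x k = qbinom x k.toNat := by
  rw [QbZ, if_pos ⟨h0, h1⟩]

lemma QbZ_coe {x k : ℕ} (h : k ≤ x) : QbZ x (k:ℤ) = qbinom x k := by
  rw [QbZ_eq_qbinom (by positivity) (by exact_mod_cast h), Int.toNat_natCast]

lemma QbZ_of_neg {x : ℕ} {k : ℤ} (h : k < 0) : QbZ x k = 0 := by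
  rw [QbZ, if_neg (by omega)]

lemma QbZ_of_gt {x : ℕ} {k : ℤ} (h : (x:ℤ) < k) : QbZ x k = 0 := by
  rw [QbZ, if_neg (by omega)]

@[simp] lemma QbZ_zero (x : ℕ) : QbZ x 0 = 1 := by
  rw [QbZ_eq_qbinom le_rfl (by positivity), Int.toNat_zero, qbinom_zero]

@[simp] lemma QbZ_self (x : ℕ) : QbZ x (x:ℤ) = 1 := by
  rw [QbZ_coe le_rfl, qbinom_self]

lemma QbZ_symm (x : ℕ) (k : ℤ) : QbZ x k = QbZ x ((x:ℤ) - k) := by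
  by_cases h : 0 ≤ k ∧ k ≤ (x:ℤ)
  · obtain ⟨h0, h1⟩ := h
    rw [QbZ_eq_qbinom h0 h1, QbZ_eq_qbinom (by omega) (by omega)]
    have : ((x:ℤ) - k).toNat = x - k.toNat := by omega
    rw [this, qbinom_symm (by omega)]
  · rcases (by omega : k < 0 ∨ (x:ℤ) < k) with h | h
    · rw [QbZ_of_neg h, QbZ_of_gt (by omega)]
    · rw [QbZ_of_gt h, QbZ_of_neg (by omega)]

lemma QbZ_pascal₁ (x : ℕ) (k : ℤ) :
    QbZ (x+1) k = qz ((x:ℤ)+1-k) * QbZ x (k-1) + qz (-k) * QbZ x k := by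
  rcases (by omega : k < 0 ∨ k = 0 ∨ (1 ≤ k ∧ k ≤ (x:ℤ)) ∨ k = (x:ℤ)+1 ∨ (x:ℤ)+1 < k) with
    h | h | ⟨h0, h1⟩ | h | h
  · rw [QbZ_of_neg h, QbZ_of_neg (by omega), QbZ_of_neg (by omega)]
    ring
  · subst h
    rw [QbZ_zero, QbZ_zero, QbZ_of_neg (by omega), neg_zero, qz_zero]
    ring
  · lift k to ℕ using (by omega) with k'
    have hk1 : 1 ≤ k' := by exact_mod_cast h0
    have hk2 : k' ≤ x := by exact_mod_cast h1
    rw [show ((k':ℕ):ℤ) - 1 = ((k'-1 : ℕ):ℤ) by omega]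
    rw [QbZ_coe (by omega), QbZ_coe (by omega), QbZ_coe (by omega)]
    exact pascal_qbinom₁ hk1 hk2
  · subst h
    rw [show ((x:ℤ)+1) = (((x+1:ℕ)):ℤ) by push_cast; ring]
    rw [QbZ_self, show (((x+1:ℕ)):ℤ) - 1 = ((x:ℕ):ℤ) by push_cast; ring, QbZ_self,
      QbZ_of_gt (by push_cast; omega)]
    rw [sub_self, qz_zero]
    ring
  · rw [QbZ_of_gt (by push_cast; omega), QbZ_of_gt (by omega), QbZ_of_gt (by omega)]
    ring

lemma QbZ_pascal₂ (x : ℕ) (k : ℤ) :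
    QbZ (x+1) k = qz (k-(x:ℤ)-1) * QbZ x (k-1) + qz k * QbZ x k := by
  rcases (by omega : k < 0 ∨ k = 0 ∨ (1 ≤ k ∧ k ≤ (x:ℤ)) ∨ k = (x:ℤ)+1 ∨ (x:ℤ)+1 < k) with
    h | h | ⟨h0, h1⟩ | h | h
  · rw [QbZ_of_neg h, QbZ_of_neg (by omega), QbZ_of_neg (by omega)]
    ring
  · subst h
    rw [QbZ_zero, QbZ_zero, QbZ_of_neg (by omega), qz_zero]
    ring
  · lift k to ℕ using (by omega) with k'
    have hk1 : 1 ≤ k' := by exact_mod_cast h0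
    have hk2 : k' ≤ x := by exact_mod_cast h1
    rw [show ((k':ℕ):ℤ) - 1 = ((k'-1 : ℕ):ℤ) by omega]
    rw [QbZ_coe (by omega), QbZ_coe (by omega), QbZ_coe (by omega)]
    exact pascal_qbinom₂ hk1 hk2
  · subst h
    rw [show ((x:ℤ)+1) = (((x+1:ℕ)):ℤ) by push_cast; ring]
    rw [QbZ_self, show (((x+1:ℕ)):ℤ) - 1 = ((x:ℕ):ℤ) by push_cast; ring, QbZ_self,
      QbZ_of_gt (by push_cast; omega)]
    rw [show (((x+1:ℕ)):ℤ) - (x:ℤ) - 1 = 0 by push_cast; ring, qz_zero]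
    ring
  · rw [QbZ_of_gt (by push_cast; omega), QbZ_of_gt (by omega), QbZ_of_gt (by omega)]
    ring
/-- The auxiliary alternating sum `B(n,j) = Σ_b (-1)^b q^b [n,b][b+j,n]`. -/
def Bsum (n j L : ℕ) : Rq :=
  ∑ b ∈ Finset.range L, (-1:Rq)^b * qz b * QbZ n b * QbZ (b+j) n

lemma Bsum_stab (n j L : ℕ) (h : n < L) : Bsum n j (L+1) = Bsum n j L := by
  rw [Bsum, Finset.sum_range_succ, Bsum, QbZ_of_gt (x := n) (by exact_mod_cast h)]
  ring

lemma Bsum_ext (n j L L' : ℕ) (h : n < L) (h' : L ≤ L') : Bsum n j L' = Bsum n j L := by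
  induction L' with
  | zero => omega
  | succ M ih =>
      rcases Nat.lt_or_ge M L with hM | hM
      · have : L = M+1 := by omega
        rw [this]
      · rw [Bsum_stab n j M (by omega), ih (by omega)]

lemma Bsum_rec (n j L : ℕ) (hL : 1 ≤ L) :
    Bsum (n+1) (j+1) L = qz (-(n:ℤ)-1) * Bsum (n+1) j L + qz ((j:ℤ)-n) * Bsum n j L
      - qz ((j:ℤ)+2) * Bsum n (j+1) (L-1) := by
  have step1 : Bsum (n+1) (j+1) L
      = (∑ b ∈ Finset.range L, (-1:Rq)^b * qz (2*(b:ℤ)+j-n) * QbZ (n+1) b * QbZ (b+j) n)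
        + qz (-(n:ℤ)-1) * Bsum (n+1) j L := by
    rw [Bsum, Bsum, Finset.mul_sum, ← Finset.sum_add_distrib]
    refine Finset.sum_congr rfl fun b _ => ?_
    have hp := QbZ_pascal₁ (b+j) ((n:ℤ)+1)
    rw [show ((b+j:ℕ):ℤ)+1-((n:ℤ)+1) = (b:ℤ)+j-n by push_cast; ring,
      show (n:ℤ)+1-1 = (n:ℤ) by ring,
      show -((n:ℤ)+1) = -(n:ℤ)-1 by ring] at hp
    rw [show b+(j+1) = (b+j)+1 by ring, show (((n+1:ℕ)):ℤ) = (n:ℤ)+1 by push_cast; ring]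
    have c1 : qz (b:ℤ) * qz ((b:ℤ)+j-n) = qz (2*(b:ℤ)+j-n) := by rw [qz_mul]; congr 1; ring
    linear_combination ((-1:Rq)^b * qz (b:ℤ) * QbZ (n+1) (b:ℤ)) * hp
      + ((-1:Rq)^b * QbZ (n+1) (b:ℤ) * QbZ (b+j) (n:ℤ)) * c1
  have step2 : (∑ b ∈ Finset.range L, (-1:Rq)^b * qz (2*(b:ℤ)+j-n) * QbZ (n+1) b * QbZ (b+j) n)
      = (∑ b ∈ Finset.range L, (-1:Rq)^b * qz ((b:ℤ)+j+1) * QbZ n ((b:ℤ)-1) * QbZ (b+j) n)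
        + qz ((j:ℤ)-n) * Bsum n j L := by
    rw [Bsum, Finset.mul_sum, ← Finset.sum_add_distrib]
    refine Finset.sum_congr rfl fun b _ => ?_
    have hp := QbZ_pascal₁ n (b:ℤ)
    have c1 : qz (2*(b:ℤ)+j-n) * qz ((n:ℤ)+1-b) = qz ((b:ℤ)+j+1) := by rw [qz_mul]; congr 1; ring
    have c2 : qz (2*(b:ℤ)+j-n) * qz (-(b:ℤ)) = qz ((j:ℤ)-n) * qz (b:ℤ) := by
      rw [qz_mul, qz_mul]; congr 1; ring
    linear_combination ((-1:Rq)^b * qz (2*(b:ℤ)+j-n) * QbZ (b+j) (n:ℤ)) * hp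
      + ((-1:Rq)^b * QbZ n ((b:ℤ)-1) * QbZ (b+j) (n:ℤ)) * c1
      + ((-1:Rq)^b * QbZ n (b:ℤ) * QbZ (b+j) (n:ℤ)) * c2
  have step3 : (∑ b ∈ Finset.range L, (-1:Rq)^b * qz ((b:ℤ)+j+1) * QbZ n ((b:ℤ)-1) * QbZ (b+j) n)
      = - (qz ((j:ℤ)+2) * Bsum n (j+1) (L-1)) := by
    rw [show L = (L-1)+1 by omega, Finset.sum_range_succ']
    have h0 : ((-1:Rq)^(0:ℕ) * qz (((0:ℕ):ℤ)+j+1) * QbZ n (((0:ℕ):ℤ)-1) * QbZ (0+j) n) = 0 := by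
      rw [QbZ_of_neg (by simp)]
      ring
    rw [h0, add_zero, Bsum, Finset.mul_sum, ← Finset.sum_neg_distrib,
      show (L-1)+1-1 = L-1 from rfl]
    refine Finset.sum_congr rfl fun k _ => ?_
    have c : qz (((k+1:ℕ):ℤ) + (j:ℤ) + 1) = qz ((j:ℤ)+2) * qz (k:ℤ) := by
      rw [qz_mul]; congr 1; push_cast; ring
    rw [show (k+1)+j = k+(j+1) by ring, show ((k+1:ℕ):ℤ)-1 = (k:ℤ) by push_cast; ring]
    linear_combination ((-1:Rq)^(k+1) * QbZ n (k:ℤ) * QbZ (k+(j+1)) (n:ℤ)) * c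
  rw [step1, step2, step3]
  ring

lemma Bval (n : ℕ) : ∀ j L : ℕ, n < L → Bsum n j L = (-1:Rq)^n * qz ((n:ℤ)*(j+1)) := by
  induction n with
  | zero =>
      intro j L hL
      rw [Bsum]
      rw [Finset.sum_eq_single 0]
      · simp
      · intro b _ hb
        rw [QbZ_of_gt (x := 0) (by exact_mod_cast Nat.pos_of_ne_zero hb)]
        ring
      · intro h
        exact absurd (Finset.mem_range.2 hL) h
  | succ n ihn =>
      intro j
      induction j with
      | zero =>
          intro L hL
          rw [Bsum, Finset.sum_eq_single (n+1)]
          · rw [add_zero, QbZ_self,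
              show ((n+1:ℕ):ℤ) * (((0:ℕ):ℤ)+1) = ((n+1:ℕ):ℤ) by push_cast; ring]
            ring
          · intro b _ hb
            rcases Nat.lt_or_ge b (n+1) with h | h
            · rw [add_zero, QbZ_of_gt (x := b) (k := ((n+1:ℕ):ℤ)) (by exact_mod_cast h)]
              ring
            · rw [QbZ_of_gt (x := n+1) (k := (b:ℤ)) (by exact_mod_cast (by omega : n+1 < b))]
              ring
          · intro h
            exact absurd (Finset.mem_range.2 hL) h
      | succ j ihj =>
          intro L hL
          rw [Bsum_rec n j L (by omega), ihj L hL, ihn j L (by omega), ihn (j+1) (L-1) (by omega)]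
          have h1 : qz (-(n:ℤ)-1) * qz (((n+1:ℕ):ℤ) * ((j:ℤ)+1))
              = qz ((n:ℤ)*((j:ℤ)+1)+(j:ℤ)-(n:ℤ)) := by
            rw [qz_mul]; congr 1; push_cast; ring
          have h2 : qz ((j:ℤ)-n) * qz ((n:ℤ)*((j:ℤ)+1))
              = qz ((n:ℤ)*((j:ℤ)+1)+(j:ℤ)-(n:ℤ)) := by
            rw [qz_mul]; congr 1; ring
          have h3 : qz ((j:ℤ)+2) * qz ((n:ℤ)*(((j+1:ℕ):ℤ)+1))
              = qz (((n+1:ℕ):ℤ)*(((j+1:ℕ):ℤ)+1)) := by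
            rw [qz_mul]; congr 1; push_cast; ring
          linear_combination (-1:Rq)^(n+1) * h1 + (-1:Rq)^n * h2 - (-1:Rq)^n * h3
/-- The sum `Σ_b (-1)^b q^{b-a(b+j-n-a)} [n+a,b][b+j-a,n]` (inner sum of the
quantum Weyl group entry for fixed `a`). -/
def Psum (n a j L : ℕ) : Rq :=
  ∑ b ∈ Finset.range L,
    (-1:Rq)^b * qz ((b:ℤ) - a*((b:ℤ)+j-n-a)) * QbZ (n+a) b * QbZ (b+(j-a)) n

lemma Psum_zero (n j L : ℕ) : Psum n 0 j L = Bsum n j L := by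
  rw [Psum, Bsum]
  refine Finset.sum_congr rfl fun b _ => ?_
  rw [show (b:ℤ) - ((0:ℕ):ℤ)*((b:ℤ)+j-n-((0:ℕ):ℤ)) = (b:ℤ) by push_cast; ring]
  rw [show n + 0 = n from rfl, show j - 0 = j from rfl]

lemma Psum_stab (n a j L : ℕ) (h : n + a < L) : Psum n a j (L+1) = Psum n a j L := by
  rw [Psum, Finset.sum_range_succ, Psum, QbZ_of_gt (x := n+a) (by exact_mod_cast h)]
  ring

lemma Psum_ext (n a j L L' : ℕ) (h : n + a < L) (h' : L ≤ L') :
    Psum n a j L' = Psum n a j L := by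
  induction L' with
  | zero => omega
  | succ M ih =>
      rcases Nat.lt_or_ge M L with hM | hM
      · have : L = M+1 := by omega
        rw [this]
      · rw [Psum_stab n a j M (by omega), ih (by omega)]

lemma Pa (n a j L : ℕ) (h1 : 1 ≤ a) (h2 : a ≤ j) (hL : n + a < L) :
    Psum n a j L = qz ((n:ℤ)+a-j) * Psum n (a-1) (j-1) L
      - qz (1-(j:ℤ)) * Psum n (a-1) j L := by
  have step1 : Psum n a j L
      = (∑ b ∈ Finset.range L, (-1:Rq)^b * qz ((b:ℤ) - a*((b:ℤ)+j-n-a) + b - n - a)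
            * QbZ (n+a-1) ((b:ℤ)-1) * QbZ (b+(j-a)) n)
        + qz ((n:ℤ)+a-j) * Psum n (a-1) (j-1) L := by
    rw [Psum, Psum, Finset.mul_sum, ← Finset.sum_add_distrib]
    refine Finset.sum_congr rfl fun b _ => ?_
    have hp := QbZ_pascal₂ (n+a-1) (b:ℤ)
    rw [show (n+a-1)+1 = n+a by omega] at hp
    rw [show ((n+a-1:ℕ):ℤ) = (n:ℤ)+a-1 by omega] at hp
    rw [show (b:ℤ)-((n:ℤ)+a-1)-1 = (b:ℤ)-n-a by ring] at hp
    have c1 : qz ((b:ℤ) - a*((b:ℤ)+j-n-a)) * qz ((b:ℤ)-n-a)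
        = qz ((b:ℤ) - a*((b:ℤ)+j-n-a) + b - n - a) := by
      rw [qz_mul]; congr 1; ring
    have c2 : qz ((b:ℤ) - a*((b:ℤ)+j-n-a)) * qz (b:ℤ)
        = qz ((n:ℤ)+a-j) * qz ((b:ℤ) - ((a-1:ℕ):ℤ)*((b:ℤ)+((j-1:ℕ):ℤ)-n-((a-1:ℕ):ℤ))) := by
      rw [qz_mul, qz_mul]
      congr 1
      have e1 : ((a-1:ℕ):ℤ) = (a:ℤ)-1 := by omega
      have e2 : ((j-1:ℕ):ℤ) = (j:ℤ)-1 := by omega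
      rw [e1, e2]
      ring
    have etop : (j-1) - (a-1) = j - a := by omega
    have etop2 : n + (a-1) = n + a - 1 := by omega
    rw [etop, etop2]
    linear_combination ((-1:Rq)^b * qz ((b:ℤ) - a*((b:ℤ)+j-n-a)) * QbZ (b+(j-a)) (n:ℤ)) * hp
      + ((-1:Rq)^b * QbZ (n+a-1) ((b:ℤ)-1) * QbZ (b+(j-a)) (n:ℤ)) * c1
      + ((-1:Rq)^b * QbZ (n+a-1) (b:ℤ) * QbZ (b+(j-a)) (n:ℤ)) * c2
  have step2 : (∑ b ∈ Finset.range L, (-1:Rq)^b * qz ((b:ℤ) - a*((b:ℤ)+j-n-a) + b - n - a)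
            * QbZ (n+a-1) ((b:ℤ)-1) * QbZ (b+(j-a)) n)
      = - (qz (1-(j:ℤ)) * Psum n (a-1) j (L-1)) := by
    rw [show L = (L-1)+1 by omega, Finset.sum_range_succ']
    have h0 : ((-1:Rq)^(0:ℕ) * qz (((0:ℕ):ℤ) - a*(((0:ℕ):ℤ)+j-n-a) + ((0:ℕ):ℤ) - n - a)
        * QbZ (n+a-1) (((0:ℕ):ℤ)-1) * QbZ (0+(j-a)) n) = 0 := by
      rw [QbZ_of_neg (by simp)]
      ring
    rw [h0, add_zero, Psum, Finset.mul_sum, ← Finset.sum_neg_distrib,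
      show (L-1)+1-1 = L-1 from rfl]
    refine Finset.sum_congr rfl fun k _ => ?_
    have c : qz (((k+1:ℕ):ℤ) - a*(((k+1:ℕ):ℤ)+j-n-a) + ((k+1:ℕ):ℤ) - n - a)
        = qz (1-(j:ℤ)) * qz ((k:ℤ) - ((a-1:ℕ):ℤ)*((k:ℤ)+j-n-((a-1:ℕ):ℤ))) := by
      rw [qz_mul]
      congr 1
      have e1 : ((a-1:ℕ):ℤ) = (a:ℤ)-1 := by omega
      have e2 : ((k+1:ℕ):ℤ) = (k:ℤ)+1 := by omega
      rw [e1, e2]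
      ring
    rw [show (k+1)+(j-a) = k+(j-(a-1)) by omega,
      show ((k+1:ℕ):ℤ)-1 = (k:ℤ) by push_cast; ring]
    rw [show n+(a-1) = n+a-1 by omega]
    linear_combination ((-1:Rq)^(k+1) * QbZ (n+a-1) (k:ℤ) * QbZ (k+(j-(a-1))) (n:ℤ)) * c
  have hstab : Psum n (a-1) j (L-1) = Psum n (a-1) j L := by
    rw [Psum_ext n (a-1) j (L-1) L (by omega) (by omega)]
  rw [step1, step2, hstab]
  ring

lemma Pvanish (n : ℕ) : ∀ a j L : ℕ, 1 ≤ a → a ≤ j → n + a < L → Psum n a j L = 0 := by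
  intro a
  induction a with
  | zero => intro j L h; omega
  | succ a ih =>
      intro j L _ h2 hL
      rw [Pa n (a+1) j L (by omega) h2 (by omega), show a+1-1 = a from rfl]
      rcases Nat.eq_zero_or_pos a with rfl | ha
      · rw [Psum_zero, Psum_zero, Bval n (j-1) L (by omega), Bval n j L (by omega)]
        have c1 : qz ((n:ℤ)+((0+1:ℕ):ℤ)-j) * qz ((n:ℤ)*(((j-1:ℕ):ℤ)+1))
            = qz ((n:ℤ)*(j:ℤ)+(n:ℤ)+1-(j:ℤ)) := by
          rw [qz_mul]
          congr 1
          have e1 : ((j-1:ℕ):ℤ) = (j:ℤ)-1 := by omega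
          rw [e1]
          push_cast
          ring
        have c2 : qz (1-(j:ℤ)) * qz ((n:ℤ)*((j:ℤ)+1)) = qz ((n:ℤ)*(j:ℤ)+(n:ℤ)+1-(j:ℤ)) := by
          rw [qz_mul]
          congr 1
          ring
        linear_combination ((-1:Rq)^n) * c1 - ((-1:Rq)^n) * c2
      · rw [ih (j-1) L ha (by omega) (by omega), ih j L ha (by omega) (by omega)]
        ring
lemma sum_collapse (L : ℕ) (B : ℤ) (f : ℕ → Rq) :
    (∑ c ∈ Finset.range L, if (c:ℤ) = B then f c else 0)
      = if 0 ≤ B ∧ B < (L:ℤ) then f B.toNat else 0 := by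
  by_cases h : 0 ≤ B ∧ B < (L:ℤ)
  · rw [if_pos h, Finset.sum_eq_single B.toNat]
    · rw [if_pos (by omega)]
    · intro c _ hc
      rw [if_neg (by omega)]
    · intro hB
      exact absurd (Finset.mem_range.2 (by omega)) hB
  · rw [if_neg h]
    apply Finset.sum_eq_zero
    intro c hc
    have hcL := Finset.mem_range.1 hc
    rw [if_neg (fun hcB => h ⟨by omega, by omega⟩)]

lemma FE_apply (m b c : ℕ) (i j : Fin (m+1)) :
    (FD m b * ED m c) i j
      = if c ≤ (j:ℕ) ∧ (i:ℕ) = (j:ℕ) - c + b then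
          qbinom ((j:ℕ)-c+b) b * qbinom (m-(j:ℕ)+c) c else 0 := by
  rw [Matrix.mul_apply]
  have hj := j.isLt
  have hl : (j:ℕ) - c < m + 1 := by omega
  rw [Finset.sum_eq_single (⟨(j:ℕ)-c, hl⟩ : Fin (m+1))]
  · simp only [FD, ED, Fin.val_mk]
    by_cases h1 : c ≤ (j:ℕ)
    · by_cases h2 : (i:ℕ) = (j:ℕ) - c + b
      · rw [if_pos h2, if_pos (show (j:ℕ)-c+c = (j:ℕ) by omega),
          if_pos (show c ≤ (j:ℕ) ∧ (i:ℕ) = (j:ℕ)-c+b from ⟨h1, h2⟩)]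
      · rw [if_neg h2, if_neg (show ¬(c ≤ (j:ℕ) ∧ (i:ℕ) = (j:ℕ)-c+b) from fun hh => h2 hh.2),
          zero_mul]
    · rw [if_neg (show ¬((j:ℕ)-c+c = (j:ℕ)) by omega),
        if_neg (show ¬(c ≤ (j:ℕ) ∧ (i:ℕ) = (j:ℕ)-c+b) from fun hh => h1 hh.1), mul_zero]
  · intro l _ hlne
    simp only [ED]
    by_cases hc : (l:ℕ) + c = (j:ℕ)
    · exfalso
      apply hlne
      apply Fin.ext
      simp only [Fin.val_mk]
      omega
    · rw [if_neg hc, mul_zero]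
  · intro h
    exact absurd (Finset.mem_univ _) h

lemma EFE_apply (m a b c : ℕ) (i j : Fin (m+1)) :
    (ED m a * (FD m b * ED m c)) i j
      = if c ≤ (j:ℕ) ∧ (j:ℕ)-c+b ≤ m ∧ (i:ℕ)+a = (j:ℕ)-c+b then
          qbinom (m-((j:ℕ)-c+b)+a) a *
            (qbinom ((j:ℕ)-c+b) b * qbinom (m-(j:ℕ)+c) c) else 0 := by
  rw [Matrix.mul_apply]
  by_cases hk : (j:ℕ)-c+b ≤ m
  · rw [Finset.sum_eq_single (⟨(j:ℕ)-c+b, by omega⟩ : Fin (m+1))]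
    · rw [FE_apply]
      simp only [ED, Fin.val_mk]
      by_cases h2 : (i:ℕ)+a = (j:ℕ)-c+b
      · by_cases h1 : c ≤ (j:ℕ)
        · rw [if_pos h2, if_pos (show c ≤ (j:ℕ) ∧ True from ⟨h1, trivial⟩),
            if_pos (show c ≤ (j:ℕ) ∧ (j:ℕ)-c+b ≤ m ∧ (i:ℕ)+a = (j:ℕ)-c+b from ⟨h1, hk, h2⟩)]
        · rw [if_neg (show ¬(c ≤ (j:ℕ) ∧ True) from fun hh => h1 hh.1),
            if_neg (show ¬(c ≤ (j:ℕ) ∧ (j:ℕ)-c+b ≤ m ∧ (i:ℕ)+a = (j:ℕ)-c+b) from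
              fun hh => h1 hh.1), mul_zero]
      · rw [if_neg h2,
          if_neg (show ¬(c ≤ (j:ℕ) ∧ (j:ℕ)-c+b ≤ m ∧ (i:ℕ)+a = (j:ℕ)-c+b) from
            fun hh => h2 hh.2.2), zero_mul]
    · intro l _ hlne
      rw [FE_apply]
      by_cases hc : c ≤ (j:ℕ) ∧ (l:ℕ) = (j:ℕ) - c + b
      · exfalso
        apply hlne
        apply Fin.ext
        simp only [Fin.val_mk]
        omega
      · rw [if_neg hc, mul_zero]
    · intro h
      exact absurd (Finset.mem_univ _) h
  · rw [if_neg (by tauto)]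
    apply Finset.sum_eq_zero
    intro l _
    rw [FE_apply]
    have : ¬(c ≤ (j:ℕ) ∧ (l:ℕ) = (j:ℕ) - c + b) := by
      rintro ⟨h1, h2⟩
      have := l.isLt
      omega
    rw [if_neg this, mul_zero]

lemma Sw_off (m : ℕ) (i j : Fin (m+1)) (h : (i:ℕ) + (j:ℕ) ≠ m) : Sw m i j = 0 := by
  simp only [Sw]
  apply Finset.sum_eq_zero; intro a _
  apply Finset.sum_eq_zero; intro b _
  apply Finset.sum_eq_zero; intro c _
  by_cases hz : (a:ℤ) - b + c = 2*(j:ℤ) - m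
  · rw [if_pos hz, Matrix.mul_assoc, EFE_apply]
    have hC : ¬(c ≤ (j:ℕ) ∧ (j:ℕ)-c+b ≤ m ∧ (i:ℕ)+a = (j:ℕ)-c+b) := by omega
    rw [if_neg hC, mul_zero]
  · rw [if_neg hz]

lemma Sw_diag (m : ℕ) (i j : Fin (m+1)) (h : (i:ℕ) + (j:ℕ) = m) :
    Sw m i j = (-1:Rq)^(m-(j:ℕ)) * qz ((((m-(j:ℕ)):ℕ):ℤ) * (((j:ℕ):ℤ)+1)) := by
  have hj := j.isLt
  have hi := i.isLt
  set n := m - (j:ℕ) with hn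
  have hin : (i:ℕ) = n := by omega
  have hm : m = n + (j:ℕ) := by omega
  simp only [Sw]
  have key : ∀ a ∈ Finset.range (m+1),
      (∑ b ∈ Finset.range (m+1), ∑ c ∈ Finset.range (m+1),
        if (a:ℤ) - b + c = 2*(j:ℤ) - m then
          ((-1:Rq)^b * qz ((b:ℤ) - (a:ℤ)*c)) * (ED m a * FD m b * ED m c) i j else 0)
      = if a ≤ (j:ℕ) then qbinom (j:ℕ) a * Psum n a (j:ℕ) (m+1) else 0 := by
    intro a ha
    have haL := Finset.mem_range.1 ha
    by_cases haj : a ≤ (j:ℕ)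
    · rw [if_pos haj, Psum, Finset.mul_sum]
      refine Finset.sum_congr rfl fun b hb => ?_
      have hbL := Finset.mem_range.1 hb
      rw [show (∑ c ∈ Finset.range (m+1),
            if (a:ℤ) - b + c = 2*(j:ℤ) - m then
              ((-1:Rq)^b * qz ((b:ℤ) - (a:ℤ)*c)) * (ED m a * FD m b * ED m c) i j else 0)
          = ∑ c ∈ Finset.range (m+1),
            if (c:ℤ) = 2*(j:ℤ) - m - a + b then
              ((-1:Rq)^b * qz ((b:ℤ) - (a:ℤ)*c)) * (ED m a * (FD m b * ED m c)) i j else 0 from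
        Finset.sum_congr rfl fun c _ => by
          rw [Matrix.mul_assoc]
          exact if_congr (by omega) rfl rfl]
      rw [sum_collapse]
      by_cases hBr : 0 ≤ 2*(j:ℤ) - m - a + b ∧ 2*(j:ℤ) - m - a + b < ((m+1:ℕ):ℤ)
      · rw [if_pos hBr]
        set c₀ : ℕ := (2*(j:ℤ) - m - a + b).toNat with hc₀
        have hc₀B : (c₀:ℤ) = 2*(j:ℤ) - m - a + b := by omega
        rw [EFE_apply]
        by_cases hbn : b ≤ n + a
        · have hcond : c₀ ≤ (j:ℕ) ∧ (j:ℕ)-c₀+b ≤ m ∧ (i:ℕ)+a = (j:ℕ)-c₀+b := by omega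
          rw [if_pos hcond]
          have v2 : (j:ℕ) - c₀ + b = n + a := by omega
          rw [v2, show m - (n+a) + a = (j:ℕ) by omega, show m - (j:ℕ) + c₀ = n + c₀ by omega]
          rw [QbZ_coe (show b ≤ n+a from hbn), show b+((j:ℕ)-a) = n+c₀ by omega]
          have hsym : QbZ (n+c₀) (n:ℤ) = qbinom (n+c₀) c₀ := by
            rw [QbZ_symm, show ((n+c₀:ℕ):ℤ) - (n:ℤ) = ((c₀:ℕ):ℤ) by push_cast; ring,
              QbZ_coe (by omega)]
          rw [hsym]
          rw [show (b:ℤ) - (a:ℤ)*(c₀:ℤ) = (b:ℤ) - a*((b:ℤ)+j-n-a) from by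
            rw [show ((c₀:ℕ):ℤ) = (b:ℤ)+j-n-a by omega]]
          ring
        · have hcond : ¬(c₀ ≤ (j:ℕ) ∧ (j:ℕ)-c₀+b ≤ m ∧ (i:ℕ)+a = (j:ℕ)-c₀+b) := by omega
          rw [if_neg hcond, QbZ_of_gt (x := n+a) (k := (b:ℤ)) (by omega)]
          ring
      · rw [if_neg hBr]
        rcases (by omega : 2*(j:ℤ) - m - a + b < 0 ∨ ((m:ℤ)+1) ≤ 2*(j:ℤ) - m - a + b) with hc | hc
        · rw [QbZ_of_gt (x := b+((j:ℕ)-a)) (k := (n:ℤ)) (by omega)]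
          ring
        · rw [QbZ_of_gt (x := n+a) (k := (b:ℤ)) (by omega)]
          ring
    · rw [if_neg haj]
      apply Finset.sum_eq_zero; intro b _
      apply Finset.sum_eq_zero; intro c _
      by_cases hz : (a:ℤ) - b + c = 2*(j:ℤ) - m
      · rw [if_pos hz, Matrix.mul_assoc, EFE_apply]
        have hC : ¬(c ≤ (j:ℕ) ∧ (j:ℕ)-c+b ≤ m ∧ (i:ℕ)+a = (j:ℕ)-c+b) := by omega
        rw [if_neg hC, mul_zero]
      · rw [if_neg hz]
  rw [Finset.sum_congr rfl key]
  rw [Finset.sum_eq_single 0]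
  · rw [if_pos (Nat.zero_le _), qbinom_zero, one_mul, Psum_zero, Bval n (j:ℕ) (m+1) (by omega)]
  · intro a _ ha0
    by_cases haj : a ≤ (j:ℕ)
    · rw [if_pos haj, Pvanish n a (j:ℕ) (m+1) (by omega) haj (by omega), mul_zero]
    · rw [if_neg haj]
  · intro hh
    exact absurd (Finset.mem_range.2 (by omega)) hh


/-- Lusztig's identity `S̃² = exp(πi H)·q^κ` on `V_m`: the square of the
quantum Weyl group operator acts on the weight-`(m − 2j)` vector `v_j` by the
scalar `(−1)^m q^{2j(m−j)+m}`. -/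
theorem stmt19 :
    Sw m * Sw m =
      Matrix.diagonal (fun j : Fin (m + 1) =>
        (-1 : Rq) ^ m * qz (2 * (j : ℤ) * ((m : ℤ) - (j : ℤ)) + m)) := by
  ext i j : 1
  rw [Matrix.mul_apply]
  have hi := i.isLt
  have hj := j.isLt
  set k₀ : Fin (m+1) := ⟨m - (i:ℕ), by omega⟩ with hk₀
  have hk₀v : (k₀:ℕ) = m - (i:ℕ) := rfl
  rw [Finset.sum_eq_single k₀]
  · by_cases hij : i = j
    · subst hij
      rw [Sw_diag m i k₀ (by omega), Sw_diag m k₀ i (by omega), Matrix.diagonal_apply_eq]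
      rw [hk₀v, show m - (m - (i:ℕ)) = (i:ℕ) by omega]
      have c1 : qz ((((i:ℕ)):ℤ) * ((((m-(i:ℕ)):ℕ):ℤ)+1)) * qz ((((m-(i:ℕ)):ℕ):ℤ) * (((i:ℕ):ℤ)+1))
          = qz (2*((i:ℕ):ℤ)*((m:ℤ)-((i:ℕ):ℤ)) + m) := by
        rw [qz_mul]
        congr 1
        have hc : (((m-(i:ℕ)):ℕ):ℤ) = (m:ℤ) - ((i:ℕ):ℤ) := by omega
        rw [hc]
        ring
      have c2 : (-1:Rq)^((i:ℕ)) * (-1:Rq)^(m-(i:ℕ)) = (-1:Rq)^m := by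
        rw [← pow_add, show (i:ℕ) + (m - (i:ℕ)) = m by omega]
      calc ((-1:Rq)^((i:ℕ)) * qz ((((i:ℕ)):ℤ) * ((((m-(i:ℕ)):ℕ):ℤ)+1)))
            * ((-1:Rq)^(m-(i:ℕ)) * qz ((((m-(i:ℕ)):ℕ):ℤ) * (((i:ℕ):ℤ)+1)))
          = ((-1:Rq)^((i:ℕ)) * (-1:Rq)^(m-(i:ℕ)))
            * (qz ((((i:ℕ)):ℤ) * ((((m-(i:ℕ)):ℕ):ℤ)+1)) * qz ((((m-(i:ℕ)):ℕ):ℤ) * (((i:ℕ):ℤ)+1))) := by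
            ring
        _ = (-1:Rq)^m * qz (2*((i:ℕ):ℤ)*((m:ℤ)-((i:ℕ):ℤ)) + m) := by rw [c1, c2]
    · rw [Sw_off m k₀ j (by
          rw [hk₀v]
          intro hh
          exact hij (Fin.ext (by omega))), mul_zero,
        Matrix.diagonal_apply_ne _ hij]
  · intro k _ hk
    rw [Sw_off m i k (fun hh => hk (Fin.ext (by rw [hk₀v]; omega))), zero_mul]
  · intro hh
    exact absurd (Finset.mem_univ _) hh

end
end Stmt19
end
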